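/- Let m ≡ 0 (mod 4) and n ≥ 2 be integers, and let k be an integer with 1 ≤ k ≤ n−1 and k ≠ ⌊n/2⌋. Then the multiplicity of 2k as an eigenvalue of the adjacency matrix of the generalised pancake graph P_m(n) is at least 3. -/

import Mathlib

open Polynomial

/-- An `m`-coloured permutation of `{1, …, n}`: a pair `(χ, ψ)` of a colour
function `χ : [n] → ℤ/mℤ` and a permutation `ψ` of `[n]` (positions and letters
are 0-indexed, so the letter `1` of the paper corresponds to `0 : Fin n`). -/
abbrev ColouredPerm (m n : ℕ) := (Fin n → ZMod m) × Equiv.Perm (Fin n)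

/-- The map on positions underlying reversal of the prefix of length `k`
(for `1 ≤ k ≤ n`; it is the identity outside this range of `k`). -/
def flipFun (n k : ℕ) : Fin n → Fin n := fun t =>
  if h : t.val < k ∧ k ≤ n then ⟨k - 1 - t.val, by omega⟩ else t

theorem flipFun_involutive (n k : ℕ) : Function.Involutive (flipFun n k) := by
  intro t
  unfold flipFun
  by_cases h : t.val < k ∧ k ≤ n
  · rw [dif_pos h, dif_pos (by simp only [Fin.val_mk]; omega)]
    apply Fin.ext
    simp only [Fin.val_mk]
    omega
  · rw [dif_neg h, dif_neg h]

/-- Reversal of the prefix of length `k`, as a permutation of positions. -/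
def flipPerm (n k : ℕ) : Equiv.Perm (Fin n) := (flipFun_involutive n k).toPerm

/-- The prefix reversal `r_k^ε` acting on `m`-coloured permutations: it
reverses the prefix of length `k` and adds `ε` to the colours in that prefix. -/
def prefixRev (m n : ℕ) (k : ℕ) (ε : ZMod m) (σ : ColouredPerm m n) :
    ColouredPerm m n :=
  (fun t => if t.val < k then σ.1 (flipPerm n k t) + ε else σ.1 t,
   σ.2 * flipPerm n k)

/-- Adjacency in the generalised pancake graph: two distinct coloured
permutations are adjacent iff one is obtained from the other by a prefix
reversal `r_k^ε` with `1 ≤ k ≤ n` and `ε ∈ {+1, -1}`. -/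
def pancakeAdj (m n : ℕ) (σ τ : ColouredPerm m n) : Prop :=
  σ ≠ τ ∧ ∃ k, 1 ≤ k ∧ k ≤ n ∧ ∃ ε : ZMod m, (ε = 1 ∨ ε = -1) ∧
    (τ = prefixRev m n k ε σ ∨ σ = prefixRev m n k ε τ)

/-- The generalised pancake graph `𝒫_m(n)`. -/
def pancakeGraph (m n : ℕ) : SimpleGraph (ColouredPerm m n) where
  Adj := pancakeAdj m n
  symm := ⟨by
    rintro a b ⟨hab, k, hk1, hk2, ε, hε, h⟩
    exact ⟨hab.symm, k, hk1, hk2, ε, hε, h.symm⟩⟩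
  loopless := ⟨by rintro a ⟨h, -⟩; exact h rfl⟩

open Classical in
/-- The (real) adjacency matrix of the generalised pancake graph `𝒫_m(n)`. -/
noncomputable def pancakeAdjMatrix (m n : ℕ) :
    Matrix (ColouredPerm m n) (ColouredPerm m n) ℝ :=
  Matrix.of fun σ τ => if pancakeAdj m n σ τ then 1 else 0

/-- The `i`-th largest eigenvalue (`i = 1, 2, …`) of a real matrix `M`,
i.e. the `i`-th largest root of its characteristic polynomial, counted
with multiplicity (junk value `0` if there are fewer than `i` real roots). -/
noncomputable def nthLargestEig {V : Type*} [Fintype V] [DecidableEq V]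
    (M : Matrix V V ℝ) (i : ℕ) : ℝ :=
  ((M.charpoly.roots.sort (· ≤ ·)).reverse).getD (i - 1) 0

/-- The diagonal matrix `D_n = diag(0, 1, …, n-1)`. -/
noncomputable def Dmat (n : ℕ) : Matrix (Fin n) (Fin n) ℝ :=
  Matrix.diagonal fun j => (j.val : ℝ)

/-- The 0/1 matrix `E_n`, whose `(i, j)` entry (1-indexed) is `1` iff
`i + j ≤ n + 1`. -/
noncomputable def Emat (n : ℕ) : Matrix (Fin n) (Fin n) ℝ :=
  Matrix.of fun j j' => if (j.val + 1) + (j'.val + 1) ≤ n + 1 then 1 else 0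

/-- The `mn × mn` block circulant matrix `circ(B_0, …, B_{m-1})` whose
`(r, s)` block is `B_{s - r mod m}`. -/
def blockCirc (m n : ℕ) (B : ZMod m → Matrix (Fin n) (Fin n) ℝ) :
    Matrix (ZMod m × Fin n) (ZMod m × Fin n) ℝ :=
  Matrix.of fun p q => B (q.1 - p.1) p.2 q.2

/-- The part `V_{i,j}` of the vertex set of `𝒫_m(n)`: those coloured
permutations in which the letter `1` (here `0 : Fin n`) occupies position `j`
with colour `i`. -/
def Vpart (m n : ℕ) (i : ZMod m) (j : Fin n) : Set (ColouredPerm m n) :=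
  {σ | σ.2 j = ⟨0, j.pos⟩ ∧ σ.1 j = i}

/-! Fix a position `k`, a letter `s` and `w : ZMod m → ℝ` with `w (c + 2) = -w c`, and let `f`
be `w` of the colour of `s` on the coloured permutations having `s` in position `k`, and `0`
elsewhere. A reversal of a prefix of length `l ≤ k` fixes position `k`, so these `2k` neighbours
each contribute `f σ`, while for `l > k` the two reversals `r_l^{±1}` contribute
`w (c + 1) + w (c - 1) = 0`. Thus `f` is an eigenvector for `2k`. When `4 ∣ m` such `w` form a
plane (spanned by the pullbacks of `cos (π c / 2)` and `sin (π c / 2)` along `ZMod m → ZMod 4`),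
and different letters give disjoint supports, so the eigenspace has dimension at least `2n`. -/

open scoped Matrix

section Multiplicity

variable {K V ι : Type*} [Field K]

lemma Matrix.card_le_rootMultiplicity_charpoly [Fintype V] [DecidableEq V] [Fintype ι]
    {A : Matrix V V K} {μ : K} {v : ι → V → K} (hv : LinearIndependent K v)
    (hAv : ∀ i, A *ᵥ v i = μ • v i) :
    Fintype.card ι ≤ A.charpoly.rootMultiplicity μ := by
  have hspan : Submodule.span K (Set.range v) ≤ Module.End.eigenspace A.toLin' μ :=
    Submodule.span_le.mpr <| Set.range_subset_iff.mpr fun i =>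
      Module.End.mem_eigenspace_iff.mpr (by rw [Matrix.toLin'_apply, hAv])
  calc Fintype.card ι = Module.finrank K (Submodule.span K (Set.range v)) :=
        (finrank_span_eq_card hv).symm
    _ ≤ Module.finrank K (Module.End.eigenspace A.toLin' μ) := Submodule.finrank_mono hspan
    _ ≤ A.charpoly.rootMultiplicity μ := by
        simpa only [Matrix.charpoly_toLin'] using LinearMap.finrank_eigenspace_le A.toLin' μ

lemma linearIndependent_of_apply_eq_ite [Finite ι] [DecidableEq ι] {v : ι → V → K}
    (p : ι → V) (h : ∀ i j, v i (p j) = if i = j then 1 else 0) : LinearIndependent K v := by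
  refine LinearIndependent.of_comp (LinearMap.funLeft K K p) ?_
  convert (Pi.basisFun K ι).linearIndependent with i
  ext j
  simp [LinearMap.funLeft, h, Pi.single_apply, eq_comm]

end Multiplicity

section PrefixReversal

variable {m n : ℕ}

lemma flipFun_of_lt {l : ℕ} (hl : l ≤ n) {t : Fin n} (ht : t.val < l) :
    flipFun n l t = ⟨l - 1 - t.val, by omega⟩ := by
  rw [flipFun, dif_pos ⟨ht, hl⟩]

lemma flipFun_of_le {l : ℕ} {t : Fin n} (ht : l ≤ t.val) : flipFun n l t = t := by
  rw [flipFun, dif_neg (by omega)]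

lemma flipFun_succ_zero (l : Fin n) : flipFun n (l + 1) ⟨0, l.pos⟩ = l := by
  rw [flipFun_of_lt l.isLt (Nat.succ_pos _)]
  ext
  simp

lemma prefixRev_snd_inv_apply (l : ℕ) (ε : ZMod m) (σ : ColouredPerm m n) (s : Fin n) :
    (prefixRev m n l ε σ).2⁻¹ s = flipFun n l (σ.2⁻¹ s) := by
  simp [prefixRev, flipPerm, _root_.mul_inv_rev]

lemma prefixRev_fst_zero (l : Fin n) (ε : ZMod m) (σ : ColouredPerm m n) :
    (prefixRev m n (l + 1) ε σ).1 ⟨0, l.pos⟩ = σ.1 l + ε := by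
  rw [prefixRev]
  dsimp only
  rw [if_pos l.val.succ_pos, flipPerm, Function.Involutive.coe_toPerm, flipFun_succ_zero]

lemma prefixRev_snd_zero (l : Fin n) (ε : ZMod m) (σ : ColouredPerm m n) :
    (prefixRev m n (l + 1) ε σ).2 ⟨0, l.pos⟩ = σ.2 l := by
  simp [prefixRev, flipPerm, flipFun_succ_zero]

lemma prefixRev_neg_prefixRev {l : ℕ} (hl : l ≤ n) (ε : ZMod m) (σ : ColouredPerm m n) :
    prefixRev m n l (-ε) (prefixRev m n l ε σ) = σ := by
  have hflip : flipPerm n l * flipPerm n l = 1 := Equiv.ext (flipFun_involutive n l)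
  refine Prod.ext (funext fun t => ?_) (by simp [prefixRev, mul_assoc, hflip])
  by_cases ht : t.val < l
  · have ht' : (flipFun n l t).val < l := by rw [flipFun_of_lt hl ht]; dsimp only; omega
    simp [prefixRev, flipPerm, ht, ht', flipFun_involutive n l t]
  · simp [prefixRev, ht]

lemma eq_and_eq_of_prefixRev_eq {σ : ColouredPerm m n} {l l' : Fin n} {ε ε' : ZMod m}
    (h : prefixRev m n (l + 1) ε σ = prefixRev m n (l' + 1) ε' σ) : l = l' ∧ ε = ε' := by
  have hl : l = l' := by
    have := congrArg (fun τ : ColouredPerm m n => τ.2 ⟨0, l.pos⟩) h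
    simpa [prefixRev_snd_zero] using this
  subst hl
  have := congrArg (fun τ : ColouredPerm m n => τ.1 ⟨0, l.pos⟩) h
  simpa [prefixRev_fst_zero] using this

lemma prefixRev_ne_self (hm : 2 < m) {ε : ZMod m} (hε : ε = 1 ∨ ε = -1) (l : Fin n)
    (σ : ColouredPerm m n) : prefixRev m n (l + 1) ε σ ≠ σ := by
  have : Fact (1 < m) := ⟨by omega⟩
  intro h
  have hl : l = ⟨0, l.pos⟩ := by
    have := congrArg (fun τ : ColouredPerm m n => τ.2 ⟨0, l.pos⟩) h
    simpa [prefixRev_snd_zero] using this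
  have := congrArg (fun τ : ColouredPerm m n => τ.1 ⟨0, l.pos⟩) h
  rw [prefixRev_fst_zero, ← hl, add_eq_left] at this
  rcases hε with rfl | rfl <;> simp at this

lemma pancakeAdj_iff_exists_prefixRev (hm : 2 < m) {σ τ : ColouredPerm m n} :
    pancakeAdj m n σ τ ↔
      ∃ l : Fin n, ∃ ε ∈ ({1, -1} : Finset (ZMod m)), prefixRev m n (l + 1) ε σ = τ := by
  simp only [Finset.mem_insert, Finset.mem_singleton]
  constructor
  · rintro ⟨-, l, hl1, hln, ε, hε, h | h⟩
    · exact ⟨⟨l - 1, by omega⟩, ε, hε, by simp [Nat.sub_add_cancel hl1, h]⟩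
    · refine ⟨⟨l - 1, by omega⟩, -ε, by rcases hε with rfl | rfl <;> simp, ?_⟩
      simp [Nat.sub_add_cancel hl1, h, prefixRev_neg_prefixRev hln]
  · rintro ⟨l, ε, hε, rfl⟩
    exact ⟨(prefixRev_ne_self hm hε l σ).symm, l + 1, by omega, l.isLt, ε, hε, Or.inl rfl⟩

lemma pancakeAdjMatrix_mulVec_apply (hm : 2 < m) [NeZero m] (f : ColouredPerm m n → ℝ)
    (σ : ColouredPerm m n) :
    (pancakeAdjMatrix m n *ᵥ f) σ =
      ∑ l : Fin n, (f (prefixRev m n (l + 1) 1 σ) + f (prefixRev m n (l + 1) (-1) σ)) := by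
  classical
  have : Fact (2 < m) := ⟨hm⟩
  have hN : Finset.univ.filter (pancakeAdj m n σ) =
      (Finset.univ ×ˢ {1, -1}).image
        fun p : Fin n × ZMod m => prefixRev m n (p.1 + 1) p.2 σ := by
    ext τ
    simp [pancakeAdj_iff_exists_prefixRev hm]
  calc (pancakeAdjMatrix m n *ᵥ f) σ
      = ∑ τ ∈ Finset.univ.filter (pancakeAdj m n σ), f τ := by
        simp [pancakeAdjMatrix, Matrix.mulVec, dotProduct, Finset.sum_filter]
    _ = ∑ p ∈ (Finset.univ : Finset (Fin n)) ×ˢ {1, -1},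
          f (prefixRev m n (p.1 + 1) p.2 σ) := by
        rw [hN, Finset.sum_image fun _ _ _ _ h => Prod.ext_iff.mpr (eq_and_eq_of_prefixRev_eq h)]
    _ = _ := by
        rw [Finset.sum_product]
        simp [Finset.sum_pair ZMod.neg_one_ne_one.symm]

end PrefixReversal

section Eigenvectors

variable {m n : ℕ}

def letterWeight (k s : Fin n) (w : ZMod m → ℝ) (σ : ColouredPerm m n) : ℝ :=
  if σ.2⁻¹ s = k then w (σ.1 k) else 0

variable {k s : Fin n} {w : ZMod m → ℝ}

lemma letterWeight_mk_swap (s' : Fin n) (χ : Fin n → ZMod m) :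
    letterWeight k s w (χ, Equiv.swap s' k) = if s = s' then w (χ k) else 0 := by
  simp [letterWeight, Equiv.swap_apply_eq_iff]

lemma letterWeight_prefixRev_of_le {l : ℕ} (hl : l ≤ k) (ε : ZMod m) (σ : ColouredPerm m n) :
    letterWeight k s w (prefixRev m n l ε σ) = letterWeight k s w σ := by
  have hk : flipFun n l k = k := flipFun_of_le hl
  rw [letterWeight, letterWeight, prefixRev_snd_inv_apply]
  simp only [(flipFun_involutive n l).eq_iff, hk, prefixRev, if_neg (not_lt.mpr hl)]

lemma letterWeight_prefixRev_of_lt {l : ℕ} (hl : k < l) (ε : ZMod m) (σ : ColouredPerm m n) :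
    letterWeight k s w (prefixRev m n l ε σ) =
      if σ.2⁻¹ s = flipFun n l k then w (σ.1 (flipFun n l k) + ε) else 0 := by
  rw [letterWeight, prefixRev_snd_inv_apply]
  simp only [(flipFun_involutive n l).eq_iff, prefixRev, if_pos (show k.val < l from hl),
    flipPerm, Function.Involutive.coe_toPerm]

lemma letterWeight_prefixRev_one_add_neg_one (hw : Function.Antiperiodic w 2) {l : ℕ}
    (hl : k < l) (σ : ColouredPerm m n) :
    letterWeight k s w (prefixRev m n l 1 σ) +
      letterWeight k s w (prefixRev m n l (-1) σ) = 0 := by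
  rw [letterWeight_prefixRev_of_lt hl, letterWeight_prefixRev_of_lt hl]
  split_ifs
  · rw [show σ.1 (flipFun n l k) + 1 = σ.1 (flipFun n l k) + -1 + 2 by ring, hw, neg_add_cancel]
  · simp

lemma pancakeAdjMatrix_mulVec_letterWeight (hm : 2 < m) [NeZero m]
    (hw : Function.Antiperiodic w 2) :
    pancakeAdjMatrix m n *ᵥ letterWeight k s w = (2 * k : ℝ) • letterWeight k s w := by
  funext σ
  have hsummand : ∀ l : Fin n,
      letterWeight k s w (prefixRev m n (l + 1) 1 σ) +
          letterWeight k s w (prefixRev m n (l + 1) (-1) σ) =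
        if l ∈ Finset.Iio k then 2 * letterWeight k s w σ else 0 := by
    intro l
    by_cases hlk : l < k
    · rw [if_pos (Finset.mem_Iio.mpr hlk), letterWeight_prefixRev_of_le hlk,
        letterWeight_prefixRev_of_le hlk, two_mul]
    · rw [if_neg (by simpa using hlk), letterWeight_prefixRev_one_add_neg_one hw (by omega)]
  rw [pancakeAdjMatrix_mulVec_apply hm, Finset.sum_congr rfl fun l _ => hsummand l,
    Finset.sum_ite_mem, Finset.univ_inter, Finset.sum_const, Fin.card_Iio, nsmul_eq_mul,
    Pi.smul_apply, smul_eq_mul]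
  ring

end Eigenvectors

def cosQuarterTurn : ZMod 4 → ℤ := ![1, 0, -1, 0]

def quarterWave {m : ℕ} (hm : 4 ∣ m) (i : Fin 2) (c : ZMod m) : ℝ :=
  cosQuarterTurn (ZMod.castHom hm (ZMod 4) c - ((i : ℕ) : ZMod 4))

lemma quarterWave_antiperiodic {m : ℕ} (hm : 4 ∣ m) (i : Fin 2) :
    Function.Antiperiodic (quarterWave hm i) 2 := by
  have hanti : ∀ d i : ZMod 4, cosQuarterTurn (d + 2 - i) = -cosQuarterTurn (d - i) := by
    decide
  intro c
  simp only [quarterWave, map_add, map_ofNat, hanti, Int.cast_neg]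

lemma quarterWave_natCast {m : ℕ} (hm : 4 ∣ m) (i j : Fin 2) :
    quarterWave hm i (j : ℕ) = if i = j then 1 else 0 := by
  have hdelta : ∀ i j : Fin 2,
      cosQuarterTurn ((j : ℕ) - (i : ℕ)) = if i = j then 1 else 0 := by
    decide
  rw [quarterWave, map_natCast, hdelta]
  split_ifs <;> simp

theorem two_mul_le_rootMultiplicity_pancakeAdjMatrix {m n k : ℕ} [NeZero m] (hm : 4 ∣ m)
    (hk : k < n) : 2 * n ≤ (pancakeAdjMatrix m n).charpoly.rootMultiplicity (2 * k : ℝ) := by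
  have hm2 : 2 < m := by
    obtain ⟨c, rfl⟩ := hm
    have := NeZero.ne (4 * c)
    omega
  let kF : Fin n := ⟨k, hk⟩
  have hli : LinearIndependent ℝ
      fun q : Fin n × Fin 2 => letterWeight kF q.1 (quarterWave hm q.2) :=
    linearIndependent_of_apply_eq_ite
      (fun q => (fun _ => ((q.2 : ℕ) : ZMod m), Equiv.swap q.1 kF))
      fun _ _ => by simp [letterWeight_mk_swap, quarterWave_natCast, Prod.ext_iff, ite_and]
  simpa [mul_comm] using Matrix.card_le_rootMultiplicity_charpoly hli
    fun q => pancakeAdjMatrix_mulVec_letterWeight hm2 (quarterWave_antiperiodic hm q.2)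

/-- For `m ≡ 0 (mod 4)` (with `m ≥ 1`), `n ≥ 2`, and
`1 ≤ k ≤ n − 1` with `k ≠ ⌊n/2⌋`, the multiplicity of `2k` as an eigenvalue of
the adjacency matrix of `𝒫_m(n)` (i.e. as a root of its characteristic
polynomial) is at least `3`. -/
theorem pancake_eigenvalue_multiplicity_three (m n k : ℕ) (hm1 : 1 ≤ m)
    (hm4 : m % 4 = 0) (hn : 2 ≤ n) (hk2 : k ≤ n - 1) :
    haveI : NeZero m := ⟨by omega⟩
    3 ≤ (pancakeAdjMatrix m n).charpoly.rootMultiplicity ((2 * k : ℕ) : ℝ) := by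
  have : NeZero m := ⟨by omega⟩
  have h := two_mul_le_rootMultiplicity_pancakeAdjMatrix (Nat.dvd_of_mod_eq_zero hm4)
    (show k < n by omega)
  push_cast
  omega
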